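/- Let X be a normal Hausdorff space. The map T sending each bounded from below lower semicontinuous f : X → ℝ to the restriction of (f^×)* to the weak*-closed convex hull of Δ(X) is a bijection from SCI(X) onto Γ(co̅^{w*}(Δ(X))), satisfies T(αf + βg) = αT(f) + βT(g) for α, β ≥ 0, and is an order isomorphism: f ≤ g if and only if T(f) ≤ T(g). -/

import Mathlib

/-!
On the weak*-closed convex hull of the Dirac functionals every `Q` is positive with `Q 1 = 1`,
and then `(f^×)*(Q)` is the support function of the Δ-set `A_f = {φ | φ ≤ f}`: shifting `φ` down
by the constant `sup (φ - f)` moves it into `A_f`. Hence `T f ∈ Γ`, and `T` is onto because a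
Δ-set `A_λ` equals `A_F` for its pointwise supremum `F`, which is lower semicontinuous. At a
Dirac functional `σ_{A_f}(δ_x) = f x`, by Urysohn's lemma on the open superlevel sets of `f`;
this gives injectivity and the order isomorphism. Positive homogeneity is a rescaling, and
`σ_{A_{f+g}} ≤ σ_{A_f} + σ_{A_g}` because every continuous `φ ≤ f + g` splits, up to `ε`, as
`ψ + χ` with `ψ ≤ f`, `χ ≤ g`: `ψ` is a continuous function inserted between the upper
semicontinuous `φ - g - ε` and the lower semicontinuous `f`.
-/

open BoundedContinuousFunction

variable {X : Type*} [TopologicalSpace X]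

/-- `SCI X`: real-valued, bounded from below, lower semicontinuous functions. -/
def IsSCI (f : X → ℝ) : Prop :=
  LowerSemicontinuous f ∧ ∃ m : ℝ, ∀ x, m ≤ f x

/-- The weak*-closed convex hull of the range of the Dirac map `Δ`. -/
noncomputable def HullOf (Δ : X → WeakDual ℝ (X →ᵇ ℝ)) : Set (WeakDual ℝ (X →ᵇ ℝ)) :=
  closure (convexHull ℝ (Set.range Δ))

/-- The operator `T`: the restriction of `(f^×)* : Q ↦ sup_φ (Q(φ) − sup_x(φ x − f x))`
to the weak*-closed convex hull of `Δ(X)`. -/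
noncomputable def Tmap (Δ : X → WeakDual ℝ (X →ᵇ ℝ)) (f : X → ℝ)
    (Q : {Q : WeakDual ℝ (X →ᵇ ℝ) // Q ∈ HullOf Δ}) : EReal :=
  ⨆ φ : X →ᵇ ℝ, (((Q : WeakDual ℝ (X →ᵇ ℝ)) φ : EReal) - ⨆ x : X, ((φ x - f x : ℝ) : EReal))

/-- Membership in `Γ(co̅^{w*}(Δ(X)))`: restrictions of support functions of
(nonempty) Δ-sets `A = {φ : ∀ x, φ x ≤ λ_x}`. -/
def IsGamma (Δ : X → WeakDual ℝ (X →ᵇ ℝ))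
    (g : {Q : WeakDual ℝ (X →ᵇ ℝ) // Q ∈ HullOf Δ} → EReal) : Prop :=
  ∃ lam : X → ℝ, {φ : X →ᵇ ℝ | ∀ x, φ x ≤ lam x}.Nonempty ∧
    ∀ Q, g Q = ⨆ φ : {φ : X →ᵇ ℝ // ∀ x, φ x ≤ lam x},
      ((Q : WeakDual ℝ (X →ᵇ ℝ)) (φ : X →ᵇ ℝ) : EReal)

theorem EReal.coe_mul_iSup_of_pos {ι : Sort*} {a : ℝ} (ha : 0 < a) (u : ι → EReal) :
    (a : EReal) * ⨆ i, u i = ⨆ i, (a : EReal) * u i := by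
  have ha' : (a : EReal) ≠ 0 := by exact_mod_cast ha.ne'
  refine Monotone.map_iSup_of_continuousAt (f := fun y => (a : EReal) * y) ?_
    (fun _ _ h => mul_le_mul_of_nonneg_left h (by exact_mod_cast ha.le))
    (EReal.coe_mul_bot_of_pos ha)
  exact (EReal.continuousAt_mul (Or.inl ha') (Or.inl ha') (Or.inl (EReal.coe_ne_bot a))
    (Or.inl (EReal.coe_ne_top a))).comp (continuousAt_const.prodMk continuousAt_id)

theorem add_sum_le_of_eq_zero {m δ s : ℝ} (hδ : 0 ≤ δ) (hms : m ≤ s + δ) {c : ℕ → ℝ}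
    (hc : ∀ i, c i ≤ 1) (hc0 : ∀ i : ℕ, s ≤ m + i * δ → c i = 0) (n : ℕ) :
    m + ∑ i ∈ Finset.range n, δ * c i ≤ s + δ := by
  suffices ∀ n : ℕ, m + ∑ i ∈ Finset.range n, δ * c i ≤ min (s + δ) (m + n * δ) from
    (this n).trans (min_le_left _ _)
  intro n
  induction n with
  | zero => simpa using hms
  | succ n ih =>
    rw [Finset.sum_range_succ, ← add_assoc]
    push_cast
    rcases le_or_gt s (m + n * δ) with hs | hs
    · rw [hc0 n hs, mul_zero, add_zero]
      exact ih.trans (min_le_min le_rfl (by nlinarith))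
    · have hcn : δ * c n ≤ δ := by nlinarith [hc n]
      have := ih.trans (min_le_right _ _)
      exact le_min (by linarith) (by linarith)

theorem le_add_sum_of_eq_one {m δ s : ℝ} (hδ : 0 ≤ δ) {c : ℕ → ℝ} (hc : ∀ i, 0 ≤ c i)
    (hc1 : ∀ i : ℕ, m + (i + 1) * δ ≤ s → c i = 1) {n : ℕ} (hsn : s ≤ m + (n + 1) * δ) :
    s - δ ≤ m + ∑ i ∈ Finset.range n, δ * c i := by
  suffices ∀ n : ℕ, min (s - δ) (m + n * δ) ≤ m + ∑ i ∈ Finset.range n, δ * c i by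
    simpa [min_eq_left (show s - δ ≤ m + n * δ by linarith)] using this n
  intro n
  induction n with
  | zero => simp
  | succ n ih =>
    rw [Finset.sum_range_succ, ← add_assoc]
    push_cast
    rcases le_or_gt (m + (n + 1) * δ) s with hs | hs
    · rw [hc1 n hs, mul_one]
      rw [min_eq_right (by linarith)] at ih
      linarith [min_le_right (s - δ) (m + (n + 1) * δ)]
    · have := mul_nonneg hδ (hc n)
      rw [min_eq_left (by linarith)] at ih ⊢
      linarith

theorem exists_bcf_sub_le_le_of_bounded [NormalSpace X] {u v : X → ℝ}
    (hu : UpperSemicontinuous u) (hv : LowerSemicontinuous v) (huv : ∀ x, u x ≤ v x)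
    {m M : ℝ} (hm : ∀ x, m ≤ u x) (hM : ∀ x, v x ≤ M) {ε : ℝ} (hε : 0 < ε) :
    ∃ ψ : X →ᵇ ℝ, (∀ x, u x - ε ≤ ψ x) ∧ ∀ x, ψ x ≤ v x := by
  set δ := ε / 2 with hδε
  have hδ : 0 < δ := half_pos hε
  set n := ⌈(M - m) / δ⌉₊
  have hn : M ≤ m + n * δ := by
    have := (div_le_iff₀ hδ).1 (Nat.le_ceil ((M - m) / δ))
    linarith
  have hstep : ∀ i : ℕ, ∃ g : X →ᵇ ℝ, (∀ x, v x ≤ m + i * δ → g x = 0) ∧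
      (∀ x, m + (i + 1) * δ ≤ u x → g x = 1) ∧ ∀ x, g x ∈ Set.Icc (0 : ℝ) 1 := by
    intro i
    have hd : Disjoint {x | v x ≤ m + i * δ} {x | m + (i + 1) * δ ≤ u x} :=
      Set.disjoint_left.2 fun x (hv' : v x ≤ _) (hu' : _ ≤ u x) => by linarith [huv x]
    obtain ⟨g, hg0, hg1, hg⟩ := exists_bounded_zero_one_of_closed
      (hv.isClosed_preimage _) (hu.isClosed_preimage _) hd
    exact ⟨g, fun x hx => hg0 hx, fun x hx => hg1 hx, hg⟩
  choose g hg0 hg1 hg using hstep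
  -- a staircase of Urysohn functions, with steps of height `δ` at the levels `m + i δ`
  refine ⟨const X (m - δ) + ∑ i ∈ Finset.range n, δ • g i, fun x => ?_, fun x => ?_⟩
  · have := le_add_sum_of_eq_one hδ.le (fun i => (hg i x).1) (fun i => hg1 i x)
      (show u x ≤ m + (n + 1) * δ by linarith [huv x, hM x])
    simp only [coe_add, coe_sum, coe_smul, Pi.add_apply, Finset.sum_apply, smul_eq_mul,
      const_apply]
    linarith
  · have := add_sum_le_of_eq_zero hδ.le (by linarith [hm x, huv x]) (fun i => (hg i x).2)
      (fun i => hg0 i x) n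
    simp only [coe_add, coe_sum, coe_smul, Pi.add_apply, Finset.sum_apply, smul_eq_mul,
      const_apply]
    linarith

theorem exists_bcf_sub_le_le [NormalSpace X] {u v : X → ℝ}
    (hu : UpperSemicontinuous u) (hv : LowerSemicontinuous v) (huv : ∀ x, u x ≤ v x)
    {m M : ℝ} (hM : ∀ x, u x ≤ M) (hm : ∀ x, m ≤ v x) {ε : ℝ} (hε : 0 < ε) :
    ∃ ψ : X →ᵇ ℝ, (∀ x, u x - ε ≤ ψ x) ∧ ∀ x, ψ x ≤ v x := by
  obtain ⟨ψ, hψu, hψv⟩ := exists_bcf_sub_le_le_of_bounded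
    (hu.sup continuous_const.upperSemicontinuous) (hv.inf continuous_const.lowerSemicontinuous)
    (fun x => le_min (max_le (huv x) (hm x)) (max_le_max_right m (hM x)))
    (fun x => le_max_right (u x) m) (fun x => min_le_right (v x) (max M m)) hε
  exact ⟨ψ, fun x => (sub_le_sub_right (le_max_left _ _) ε).trans (hψu x),
    fun x => (hψv x).trans (min_le_left _ _)⟩

theorem IsSCI.add {f g : X → ℝ} (hf : IsSCI f) (hg : IsSCI g) : IsSCI fun x => f x + g x :=
  ⟨hf.1.add hg.1, hf.2.elim fun m hm => hg.2.elim fun m' hm' =>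
    ⟨m + m', fun x => add_le_add (hm x) (hm' x)⟩⟩

theorem IsSCI.const_mul {f : X → ℝ} (hf : IsSCI f) {a : ℝ} (ha : 0 ≤ a) :
    IsSCI fun x => a * f x :=
  ⟨(continuous_const_mul a).comp_lowerSemicontinuous hf.1 (monotone_mul_left_of_nonneg ha),
    hf.2.elim fun m hm => ⟨a * m, fun x => mul_le_mul_of_nonneg_left (hm x) ha⟩⟩

theorem exists_decomposition_of_le_add [NormalSpace X] {f g : X → ℝ} (hf : IsSCI f)
    (hg : IsSCI g) {φ : X →ᵇ ℝ} (hφ : ∀ x, φ x ≤ f x + g x) {ε : ℝ} (hε : 0 < ε) :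
    ∃ ψ χ : X →ᵇ ℝ, (∀ x, ψ x ≤ f x) ∧ (∀ x, χ x ≤ g x) ∧ φ = ψ + χ + const X ε := by
  obtain ⟨hfl, mf, hmf⟩ := hf
  obtain ⟨hgl, mg, hmg⟩ := hg
  have hu : UpperSemicontinuous fun x => φ x - g x := by
    simpa only [sub_eq_add_neg, Pi.neg_apply] using φ.continuous.upperSemicontinuous.add hgl.neg
  obtain ⟨ψ, hψu, hψf⟩ := exists_bcf_sub_le_le (M := ‖φ‖ - mg) hu hfl (fun x => by linarith [hφ x])
    (fun x => by linarith [φ.apply_le_norm x, hmg x]) hmf hε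
  refine ⟨ψ, φ - ψ - const X ε, hψf, fun x => ?_, by abel⟩
  simp only [coe_sub, Pi.sub_apply, const_apply]
  linarith [hψu x]

noncomputable def dirac (x : X) : WeakDual ℝ (X →ᵇ ℝ) :=
  StrongDual.toWeakDual (evalCLM ℝ x)

@[simp]
theorem dirac_apply (x : X) (φ : X →ᵇ ℝ) : dirac x φ = φ x := rfl

theorem dirac_mem_hullOf (x : X) : dirac x ∈ HullOf (dirac (X := X)) :=
  subset_closure (subset_convexHull ℝ _ ⟨x, rfl⟩)

theorem nonempty_of_mem_hullOf {Δ : X → WeakDual ℝ (X →ᵇ ℝ)} {Q : WeakDual ℝ (X →ᵇ ℝ)}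
    (hQ : Q ∈ HullOf Δ) : Nonempty X := by
  by_contra h
  rw [not_nonempty_iff] at h
  simp [HullOf, Set.range_eq_empty] at hQ

def stateSpace (X : Type*) [TopologicalSpace X] : Set (WeakDual ℝ (X →ᵇ ℝ)) :=
  {Q | Q 1 = 1 ∧ ∀ φ : X →ᵇ ℝ, (∀ x, 0 ≤ φ x) → 0 ≤ Q φ}

theorem isClosed_stateSpace : IsClosed (stateSpace X) := by
  have : stateSpace X = {Q | Q 1 = 1} ∩ ⋂ φ : X →ᵇ ℝ, ⋂ _ : ∀ x, 0 ≤ φ x, {Q | 0 ≤ Q φ} := by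
    ext; simp [stateSpace]
  rw [this]
  refine (isClosed_eq (WeakDual.eval_continuous 1) continuous_const).inter ?_
  exact isClosed_iInter fun φ => isClosed_iInter fun _ =>
    isClosed_le continuous_const (WeakDual.eval_continuous φ)

theorem convex_stateSpace : Convex ℝ (stateSpace X) := by
  rintro Q ⟨hQ1, hQ⟩ R ⟨hR1, hR⟩ s t hs ht hst
  refine ⟨?_, fun φ hφ => ?_⟩
  · change s * Q 1 + t * R 1 = 1
    rw [hQ1, hR1, mul_one, mul_one, hst]
  · change 0 ≤ s * Q φ + t * R φ
    exact add_nonneg (mul_nonneg hs (hQ φ hφ)) (mul_nonneg ht (hR φ hφ))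

theorem hullOf_dirac_subset_stateSpace : HullOf (dirac (X := X)) ⊆ stateSpace X :=
  closure_minimal (convexHull_min (Set.range_subset_iff.2 fun x => ⟨rfl, fun _ hφ => hφ x⟩)
    convex_stateSpace) isClosed_stateSpace

theorem apply_const_of_apply_one {Q : WeakDual ℝ (X →ᵇ ℝ)} (hQ : Q 1 = 1) (c : ℝ) :
    Q (const X c) = c := by
  have : const X c = c • (1 : X →ᵇ ℝ) := by ext; simp
  rw [this, map_smul, hQ, smul_eq_mul, mul_one]

theorem apply_mono_of_mem_stateSpace {Q : WeakDual ℝ (X →ᵇ ℝ)} (hQ : Q ∈ stateSpace X)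
    {φ ψ : X →ᵇ ℝ} (h : ∀ x, φ x ≤ ψ x) : Q φ ≤ Q ψ :=
  sub_nonneg.1 (map_sub Q ψ φ ▸ hQ.2 (ψ - φ) fun x => sub_nonneg.2 (h x))

/-- The support function `σ_A` of the Δ-set `A = {φ | ∀ x, φ x ≤ lam x}`. -/
noncomputable def deltaSupport (lam : X → ℝ) (Q : WeakDual ℝ (X →ᵇ ℝ)) : EReal :=
  ⨆ φ : {φ : X →ᵇ ℝ // ∀ x, φ x ≤ lam x}, (Q φ : EReal)

theorem deltaSupport_mono {lam mu : X → ℝ}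
    (h : ∀ φ : X →ᵇ ℝ, (∀ x, φ x ≤ lam x) → ∀ x, φ x ≤ mu x) (Q : WeakDual ℝ (X →ᵇ ℝ)) :
    deltaSupport lam Q ≤ deltaSupport mu Q :=
  iSup_le fun φ => le_iSup_of_le ⟨φ, h φ φ.2⟩ le_rfl

theorem deltaSupport_dirac [T1Space X] [NormalSpace X] {f : X → ℝ} (hf : IsSCI f) (x : X) :
    deltaSupport f (dirac x) = f x := by
  obtain ⟨hfl, m, hm⟩ := hf
  refine le_antisymm (iSup_le fun φ => EReal.coe_le_coe_iff.2 (φ.2 x))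
    (EReal.ge_of_forall_gt_iff_ge.1 fun r hr => ?_)
  have hrx : r < f x := EReal.coe_lt_coe_iff.1 hr
  -- the low value `min m r` (rather than `m`) keeps `φ ≤ f` on `{f ≤ r}` also when `r < m`
  obtain ⟨φ, hφs, hφx, hφ⟩ := exists_bounded_mem_Icc_of_closed_of_le
    (hfl.isClosed_preimage r) isClosed_singleton
    (Set.disjoint_singleton_right.2 hrx.not_ge) (min_le_right m r)
  refine le_iSup_of_le ⟨φ, fun y => ?_⟩ ?_
  · by_cases hy : f y ≤ r
    · rw [hφs hy]
      exact (min_le_left m r).trans (hm y)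
    · exact (hφ y).2.trans (not_le.1 hy).le
  · rw [dirac_apply, hφx rfl]
    rfl

theorem deltaSupport_const_mul {Q : WeakDual ℝ (X →ᵇ ℝ)} (hQ : Q ∈ stateSpace X)
    (f : X → ℝ) {a : ℝ} (ha : 0 ≤ a) :
    deltaSupport (fun x => a * f x) Q = a * deltaSupport f Q := by
  rcases ha.eq_or_lt with rfl | ha
  · simp only [zero_mul, EReal.coe_zero]
    refine le_antisymm (iSup_le fun φ => ?_) (le_iSup_of_le ⟨0, fun x => le_rfl⟩ (by simp))
    have := apply_mono_of_mem_stateSpace hQ (ψ := 0) fun x => φ.2 x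
    rw [map_zero] at this
    exact_mod_cast this
  · unfold deltaSupport
    rw [EReal.coe_mul_iSup_of_pos ha]
    refine le_antisymm (iSup_le fun φ => ?_) (iSup_le fun ψ => ?_)
    · refine le_iSup_of_le ⟨a⁻¹ • (φ : X →ᵇ ℝ), fun x => ?_⟩ ?_
      · simpa [inv_mul_le_iff₀ ha] using φ.2 x
      · rw [map_smul, smul_eq_mul, ← EReal.coe_mul, mul_inv_cancel_left₀ ha.ne']
    · refine le_iSup_of_le ⟨a • (ψ : X →ᵇ ℝ), fun x => ?_⟩ ?_
      · simpa using mul_le_mul_of_nonneg_left (ψ.2 x) ha.le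
      · rw [map_smul, smul_eq_mul, EReal.coe_mul]

theorem deltaSupport_add [NormalSpace X] {f g : X → ℝ} (hf : IsSCI f) (hg : IsSCI g)
    {Q : WeakDual ℝ (X →ᵇ ℝ)} (hQ : Q 1 = 1) :
    deltaSupport (fun x => f x + g x) Q = deltaSupport f Q + deltaSupport g Q := by
  refine le_antisymm (iSup_le fun φ => EReal.ge_of_forall_gt_iff_ge.1 fun r hr => ?_)
    (EReal.add_le_of_forall_lt fun p hp q hq => ?_)
  · obtain ⟨ψ, χ, hψ, hχ, hφ⟩ :=
      exists_decomposition_of_le_add hf hg φ.2 (sub_pos.2 (EReal.coe_lt_coe_iff.1 hr))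
    have hr : r = Q ψ + Q χ := by
      have := congrArg Q hφ
      rw [map_add, map_add, apply_const_of_apply_one hQ] at this
      linarith
    rw [hr, EReal.coe_add]
    exact add_le_add (le_iSup_of_le ⟨ψ, hψ⟩ le_rfl) (le_iSup_of_le ⟨χ, hχ⟩ le_rfl)
  · obtain ⟨ψ, hψ⟩ := lt_iSup_iff.1 hp
    obtain ⟨χ, hχ⟩ := lt_iSup_iff.1 hq
    calc p + q ≤ Q ψ + Q χ := add_le_add hψ.le hχ.le
      _ = Q (ψ + χ : X →ᵇ ℝ) := by rw [map_add, EReal.coe_add]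
      _ ≤ _ := le_iSup_of_le ⟨ψ + χ, fun x => add_le_add (ψ.2 x) (χ.2 x)⟩ le_rfl

noncomputable def deltaEnvelope (lam : X → ℝ) (x : X) : ℝ :=
  ⨆ φ : {φ : X →ᵇ ℝ // ∀ x, φ x ≤ lam x}, (φ : X →ᵇ ℝ) x

section deltaEnvelope

variable {lam : X → ℝ}

theorem bddAbove_deltaEnvelope (x : X) :
    BddAbove (Set.range fun φ : {φ : X →ᵇ ℝ // ∀ x, φ x ≤ lam x} => (φ : X →ᵇ ℝ) x) :=
  ⟨lam x, Set.forall_mem_range.2 fun φ => φ.2 x⟩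

theorem isSCI_deltaEnvelope (hne : {φ : X →ᵇ ℝ | ∀ x, φ x ≤ lam x}.Nonempty) :
    IsSCI (deltaEnvelope lam) := by
  obtain ⟨φ₀, hφ₀⟩ := hne
  exact ⟨lowerSemicontinuous_ciSup bddAbove_deltaEnvelope
      fun φ => (φ : X →ᵇ ℝ).continuous.lowerSemicontinuous,
    -‖φ₀‖, fun x => (φ₀.neg_norm_le_apply x).trans (le_ciSup (bddAbove_deltaEnvelope x) ⟨φ₀, hφ₀⟩)⟩

theorem deltaSupport_deltaEnvelope (hne : {φ : X →ᵇ ℝ | ∀ x, φ x ≤ lam x}.Nonempty) :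
    deltaSupport (deltaEnvelope lam) = deltaSupport lam := by
  have : Nonempty {φ : X →ᵇ ℝ // ∀ x, φ x ≤ lam x} := hne.to_subtype
  funext Q
  exact le_antisymm
    (deltaSupport_mono (fun φ hφ x => (hφ x).trans (ciSup_le fun ψ => ψ.2 x)) Q)
    (deltaSupport_mono (fun φ hφ x => le_ciSup (bddAbove_deltaEnvelope x) ⟨φ, hφ⟩) Q)

end deltaEnvelope

theorem tmap_eq_deltaSupport {Δ : X → WeakDual ℝ (X →ᵇ ℝ)} {f : X → ℝ} {m : ℝ}
    (hm : ∀ x, m ≤ f x) (Q : {Q : WeakDual ℝ (X →ᵇ ℝ) // Q ∈ HullOf Δ})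
    (hQ : (Q : WeakDual ℝ (X →ᵇ ℝ)) 1 = 1) :
    Tmap Δ f Q = deltaSupport f Q := by
  have := nonempty_of_mem_hullOf Q.2
  refine le_antisymm (iSup_le fun φ => ?_) (iSup_le fun ψ => le_iSup_of_le (ψ : X →ᵇ ℝ) ?_)
  · have hbdd : BddAbove (Set.range fun x => φ x - f x) :=
      ⟨‖φ‖ - m, Set.forall_mem_range.2 fun x => by linarith [φ.apply_le_norm x, hm x]⟩
    set c := ⨆ x, (φ x - f x)
    have hc : ⨆ x, ((φ x - f x : ℝ) : EReal) = c :=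
      (Monotone.map_ciSup_of_continuousAt continuous_coe_real_ereal.continuousAt
        EReal.coe_strictMono.monotone hbdd).symm
    rw [hc, ← EReal.coe_sub, ← apply_const_of_apply_one hQ c, ← map_sub]
    refine le_iSup_of_le ⟨φ - const X c, fun x => ?_⟩ le_rfl
    simp only [coe_sub, Pi.sub_apply, const_apply]
    linarith [le_ciSup hbdd x]
  · have hψ : ⨆ x, (((ψ : X →ᵇ ℝ) x - f x : ℝ) : EReal) ≤ 0 :=
      iSup_le fun x => EReal.coe_nonpos.2 (sub_nonpos.2 (ψ.2 x))
    simpa using EReal.sub_le_sub (le_refl ((Q : WeakDual ℝ (X →ᵇ ℝ)) ψ : EReal)) hψ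

theorem tmap_dirac_eq_deltaSupport {f : X → ℝ} (hf : IsSCI f)
    (Q : {Q : WeakDual ℝ (X →ᵇ ℝ) // Q ∈ HullOf dirac}) :
    Tmap dirac f Q = deltaSupport f Q :=
  tmap_eq_deltaSupport hf.2.choose_spec Q (hullOf_dirac_subset_stateSpace Q.2).1

theorem tmap_dirac [T1Space X] [NormalSpace X] {f : X → ℝ} (hf : IsSCI f) (x : X) :
    Tmap dirac f ⟨dirac x, dirac_mem_hullOf x⟩ = f x :=
  (tmap_dirac_eq_deltaSupport hf _).trans (deltaSupport_dirac hf x)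

theorem tmap_le_tmap_iff [T1Space X] [NormalSpace X] {f g : X → ℝ} (hf : IsSCI f)
    (hg : IsSCI g) : (∀ x, f x ≤ g x) ↔ ∀ Q, Tmap dirac f Q ≤ Tmap dirac g Q := by
  refine ⟨fun h Q => ?_, fun h x => ?_⟩
  · rw [tmap_dirac_eq_deltaSupport hf, tmap_dirac_eq_deltaSupport hg]
    exact deltaSupport_mono (fun φ hφ x => (hφ x).trans (h x)) Q
  · simpa [tmap_dirac hf, tmap_dirac hg] using h ⟨dirac x, dirac_mem_hullOf x⟩

theorem cone_isomorphism [T2Space X] [NormalSpace X] :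
    ∃ Δ : X → WeakDual ℝ (X →ᵇ ℝ), (∀ (x : X) (φ : X →ᵇ ℝ), Δ x φ = φ x) ∧
      -- T maps SCI(X) into Γ(co̅^{w*}(Δ(X)))
      (∀ f : X → ℝ, IsSCI f → IsGamma Δ (Tmap Δ f)) ∧
      -- T is injective on SCI(X)
      (∀ f g : X → ℝ, IsSCI f → IsSCI g → Tmap Δ f = Tmap Δ g → f = g) ∧
      -- T is onto Γ(co̅^{w*}(Δ(X)))
      (∀ h, IsGamma Δ h → ∃ f : X → ℝ, IsSCI f ∧ Tmap Δ f = h) ∧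
      -- T(αf + βg) = αT(f) + βT(g) for α, β ≥ 0
      (∀ f g : X → ℝ, IsSCI f → IsSCI g → ∀ a b : ℝ, 0 ≤ a → 0 ≤ b →
        Tmap Δ (fun x => a * f x + b * g x) =
          fun Q => (a : EReal) * Tmap Δ f Q + (b : EReal) * Tmap Δ g Q) ∧
      -- T is an order isomorphism
      (∀ f g : X → ℝ, IsSCI f → IsSCI g →
        ((∀ x, f x ≤ g x) ↔ ∀ Q, Tmap Δ f Q ≤ Tmap Δ g Q)) := by
  refine ⟨dirac, fun _ _ => rfl, fun f hf => ?_, fun f g hf hg hfg => ?_, fun h hh => ?_,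
    fun f g hf hg a b ha hb => ?_, fun f g hf hg => tmap_le_tmap_iff hf hg⟩
  · obtain ⟨m, hm⟩ := hf.2
    exact ⟨f, ⟨const X m, hm⟩, tmap_dirac_eq_deltaSupport hf⟩
  · funext x
    exact_mod_cast (tmap_dirac hf x).symm.trans (hfg ▸ tmap_dirac hg x)
  · obtain ⟨lam, hne, hh⟩ := hh
    refine ⟨deltaEnvelope lam, isSCI_deltaEnvelope hne, funext fun Q => ?_⟩
    rw [tmap_dirac_eq_deltaSupport (isSCI_deltaEnvelope hne), deltaSupport_deltaEnvelope hne]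
    exact (hh Q).symm
  · funext Q
    have hQ := hullOf_dirac_subset_stateSpace Q.2
    rw [tmap_dirac_eq_deltaSupport ((hf.const_mul ha).add (hg.const_mul hb)),
      tmap_dirac_eq_deltaSupport hf, tmap_dirac_eq_deltaSupport hg,
      deltaSupport_add (hf.const_mul ha) (hg.const_mul hb) hQ.1,
      deltaSupport_const_mul hQ f ha, deltaSupport_const_mul hQ g hb]
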